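/- Let i = (1,1,...,1,0) ∈ A^n (n−1 ones followed by 0). Then I_i = {η ∈ A^n : Π(η) = Π(i)} has exactly n elements, namely the words τ^ℓ = (1^ℓ, 0, 3^{n-1-ℓ}) for ℓ = 0, 1, ..., n−1. -/

import Mathlib

/-- The alphabet `A = {0, 1, 3}`. -/
def A : Set ℕ := {0, 1, 3}

/-- The natural projection `Π(i) = Σ_{k=1}^n i_k 3^{-(k-1)}`. -/
noncomputable def proj : List ℕ → ℝ
  | [] => 0
  | a :: t => (a : ℝ) + proj t / 3

/-- Integer-valued version of `proj`, scaled by `3 ^ (length - 1)`. -/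
def val : List ℕ → ℕ
  | [] => 0
  | a :: t => a * 3 ^ t.length + val t

lemma proj_val (η : List ℕ) : (3:ℝ) ^ η.length * proj η = 3 * val η := by
  induction η with
  | nil => simp [proj, val]
  | cons a t ih =>
    simp only [proj, val, List.length_cons, pow_succ]
    push_cast
    linear_combination ih

lemma val_eq_of_proj_eq {η ι : List ℕ} (h : η.length = ι.length)
    (hp : proj η = proj ι) : val η = val ι := by
  have h1 := proj_val η
  have h2 := proj_val ι
  rw [h, hp, h2] at h1
  have : ((val η : ℝ)) = val ι := by linarith
  exact_mod_cast this

lemma proj_eq_of_val_eq {η ι : List ℕ} (h : η.length = ι.length)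
    (hv : val η = val ι) : proj η = proj ι := by
  have h1 := proj_val η
  have h2 := proj_val ι
  rw [h, hv, ← h2] at h1
  have h3 : (3:ℝ) ^ ι.length ≠ 0 := by positivity
  exact mul_left_cancel₀ h3 h1

lemma lemM : ∀ k, 2 * val (List.replicate k 3) + 3 = 3 ^ (k+1)
  | 0 => rfl
  | (k+1) => by
    have ih := lemM k
    simp only [List.replicate_succ, val, List.length_replicate]
    have h1 : (3:ℕ) ^ (k+1) = 3 * 3 ^ k := by ring
    have h2 : (3:ℕ) ^ (k+1+1) = 9 * 3 ^ k := by ring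
    omega

lemma lemU : ∀ ℓ k, 2 * val (List.replicate ℓ 1 ++ 0 :: List.replicate k 3) + 3
    = 3 ^ (ℓ + k + 1)
  | 0, k => by
    have h := lemM k
    have he : (0:ℕ) + k + 1 = k + 1 := by omega
    rw [he]
    simp only [List.replicate_zero, List.nil_append, val, List.length_replicate,
      zero_mul, zero_add]
    exact h
  | (ℓ+1), k => by
    have ih := lemU ℓ k
    have hlen : (List.replicate ℓ 1 ++ 0 :: List.replicate k 3).length = ℓ + k + 1 := by
      simp only [List.length_append, List.length_replicate, List.length_cons]
      omega
    rw [List.replicate_succ, List.cons_append]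
    have hval : val (1 :: (List.replicate ℓ 1 ++ 0 :: List.replicate k 3))
        = 3 ^ (ℓ + k + 1) + val (List.replicate ℓ 1 ++ 0 :: List.replicate k 3) := by
      rw [val, hlen]; ring
    rw [hval]
    have h2 : (3:ℕ) ^ (ℓ + 1 + k + 1) = 3 * 3 ^ (ℓ + k + 1) := by ring
    omega

lemma mem_A_le {x : ℕ} (hx : x ∈ A) : x = 0 ∨ x = 1 ∨ x = 3 := hx

lemma val_le : ∀ t : List ℕ, (∀ x ∈ t, x ∈ A) → 2 * val t + 3 ≤ 3 ^ (t.length + 1)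
  | [] => fun _ => le_refl 3
  | (a :: t) => by
    intro hA
    have ih := val_le t (fun x hx => hA x (List.mem_cons_of_mem a hx))
    have ha : a = 0 ∨ a = 1 ∨ a = 3 := mem_A_le (hA a (List.mem_cons_self))
    have ha3 : a ≤ 3 := by omega
    have hq : a * 3 ^ t.length ≤ 3 * 3 ^ t.length := Nat.mul_le_mul_right _ ha3
    simp only [val, List.length_cons]
    have h1 : (3:ℕ) ^ (t.length + 1) = 3 * 3 ^ t.length := by ring
    have h2 : (3:ℕ) ^ (t.length + 1 + 1) = 9 * 3 ^ t.length := by ring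
    omega

lemma val_eq3 : ∀ t : List ℕ, (∀ x ∈ t, x ∈ A) →
    2 * val t + 3 = 3 ^ (t.length + 1) → t = List.replicate t.length 3
  | [] => fun _ _ => rfl
  | (a :: t) => by
    intro hA hv
    have hle := val_le t (fun x hx => hA x (List.mem_cons_of_mem a hx))
    have ha : a = 0 ∨ a = 1 ∨ a = 3 := mem_A_le (hA a (List.mem_cons_self))
    have hqpos : 1 ≤ (3:ℕ) ^ t.length := Nat.one_le_pow _ _ (by norm_num)
    simp only [val, List.length_cons] at hv ⊢
    have h1 : (3:ℕ) ^ (t.length + 1) = 3 * 3 ^ t.length := by ring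
    have h2 : (3:ℕ) ^ (t.length + 1 + 1) = 9 * 3 ^ t.length := by ring
    have ha3 : a = 3 := by
      rcases ha with rfl | rfl | rfl
      · omega
      · omega
      · rfl
    subst ha3
    have ht : 2 * val t + 3 = 3 ^ (t.length + 1) := by omega
    have ht3 := val_eq3 t (fun x hx => hA x (List.mem_cons_of_mem 3 hx)) ht
    rw [List.replicate_succ]
    exact congrArg (List.cons 3) ht3

lemma key : ∀ n, ∀ η : List ℕ, η.length = n + 1 → (∀ x ∈ η, x ∈ A) →
    val η = val (List.replicate n 1 ++ [0]) →
    ∃ ℓ, ℓ ≤ n ∧ η = List.replicate ℓ 1 ++ 0 :: List.replicate (n - ℓ) 3 := by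
  intro n
  induction n with
  | zero =>
    intro η hl hA hv
    obtain ⟨a, rfl⟩ := List.length_eq_one_iff.mp hl
    simp only [List.replicate_zero, List.nil_append, val, List.length_nil, pow_zero,
      mul_one] at hv
    have ha0 : a = 0 := by omega
    subst ha0
    exact ⟨0, le_refl 0, rfl⟩
  | succ m ih =>
    intro η hl hA hv
    match η with
    | a :: t =>
      have htl : t.length = m + 1 := by simpa using hl
      have htA : ∀ x ∈ t, x ∈ A := fun x hx => hA x (List.mem_cons_of_mem a hx)
      have ha : a = 0 ∨ a = 1 ∨ a = 3 := mem_A_le (hA a (List.mem_cons_self))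
      have htarget : List.replicate (m+1) 1 ++ [0]
          = 1 :: (List.replicate m 1 ++ [0]) := by
        simp [List.replicate_succ]
      have hTlen : (List.replicate m 1 ++ [0]).length = m + 1 := by simp
      have hT : 2 * val (List.replicate m 1 ++ [0]) + 3 = 3 ^ (m + 1) := by
        have h := lemU m 0
        have h0 : (0 : ℕ) :: List.replicate 0 3 = [0] := rfl
        rw [h0] at h
        have he : m + 0 + 1 = m + 1 := by omega
        rwa [he] at h
      have hv' : a * 3 ^ (m+1) + val t
          = 3 ^ (m+1) + val (List.replicate m 1 ++ [0]) := by
        rw [htarget] at hv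
        simpa [val, htl, hTlen] using hv
      rcases ha with rfl | rfl | rfl
      · -- a = 0 : t must be all 3's
        have hvt : val t = 3 ^ (m+1) + val (List.replicate m 1 ++ [0]) := by omega
        have heq : 2 * val t + 3 = 3 ^ (t.length + 1) := by
          rw [htl]
          have h2 : (3:ℕ) ^ (m + 1 + 1) = 3 * 3 ^ (m+1) := by ring
          omega
        have ht3 := val_eq3 t htA heq
        refine ⟨0, Nat.zero_le _, ?_⟩
        simp only [List.replicate_zero, List.nil_append, Nat.sub_zero]
        rw [ht3, htl, List.replicate_succ]
      · -- a = 1 : recurse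
        have hvt : val t = val (List.replicate m 1 ++ [0]) := by omega
        obtain ⟨ℓ, hℓ, ht⟩ := ih t htl htA hvt
        refine ⟨ℓ + 1, by omega, ?_⟩
        rw [List.replicate_succ, List.cons_append, ht]
        have : m + 1 - (ℓ + 1) = m - ℓ := by omega
        rw [this]
      · -- a = 3 : impossible
        exfalso
        have h3 : (3:ℕ) * 3 ^ (m+1) = 3 ^ (m+1) + 2 * 3 ^ (m+1) := by ring
        have hqpos : 1 ≤ (3:ℕ) ^ (m+1) := Nat.one_le_pow _ _ (by norm_num)
        omega

/-- For `i = (1, ..., 1, 0)` (`n-1` ones followed by `0`), the fiber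
`I_i = {η ∈ A^n : Π(η) = Π(i)}` consists precisely of the `n` words
`τ^ℓ = (1^ℓ, 0, 3^{n-1-ℓ})`, `ℓ = 0, ..., n-1`, and has exactly `n` elements. -/
theorem stmt_11 (n : ℕ) (hn : 1 ≤ n) :
    {η : List ℕ | η.length = n ∧ (∀ x ∈ η, x ∈ A) ∧
        proj η = proj (List.replicate (n - 1) 1 ++ [0])} =
      (fun ℓ : ℕ => List.replicate ℓ 1 ++ 0 :: List.replicate (n - 1 - ℓ) 3) ''
        {ℓ | ℓ < n} ∧
    Set.ncard {η : List ℕ | η.length = n ∧ (∀ x ∈ η, x ∈ A) ∧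
        proj η = proj (List.replicate (n - 1) 1 ++ [0])} = n := by
  obtain ⟨m, rfl⟩ : ∃ m, n = m + 1 := ⟨n - 1, by omega⟩
  have hm1 : m + 1 - 1 = m := by omega
  rw [hm1]
  have hTlen : (List.replicate m 1 ++ [0]).length = m + 1 := by simp
  have hset : {η : List ℕ | η.length = m + 1 ∧ (∀ x ∈ η, x ∈ A) ∧
        proj η = proj (List.replicate m 1 ++ [0])} =
      (fun ℓ : ℕ => List.replicate ℓ 1 ++ 0 :: List.replicate (m - ℓ) 3) ''
        {ℓ | ℓ < m + 1} := by
    ext η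
    simp only [Set.mem_setOf_eq, Set.mem_image]
    constructor
    · rintro ⟨hl, hA, hp⟩
      have hv : val η = val (List.replicate m 1 ++ [0]) :=
        val_eq_of_proj_eq (by rw [hl, hTlen]) hp
      obtain ⟨ℓ, hℓ, hη⟩ := key m η hl hA hv
      exact ⟨ℓ, by omega, hη.symm⟩
    · rintro ⟨ℓ, hℓ, rfl⟩
      have hℓ' : ℓ ≤ m := by
        have : ℓ < m + 1 := hℓ
        omega
      have hlen : (List.replicate ℓ 1 ++ 0 :: List.replicate (m - ℓ) 3).length
          = m + 1 := by
        simp only [List.length_append, List.length_replicate, List.length_cons]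
        omega
      refine ⟨hlen, ?_, ?_⟩
      · intro x hx
        simp only [List.mem_append, List.mem_cons, List.mem_replicate] at hx
        rcases hx with ⟨_, rfl⟩ | rfl | ⟨_, rfl⟩ <;> simp [A]
      · apply proj_eq_of_val_eq (by rw [hlen, hTlen])
        have h1 := lemU ℓ (m - ℓ)
        have h2 := lemU m 0
        have h0 : (0 : ℕ) :: List.replicate 0 3 = [0] := rfl
        rw [h0] at h2
        have he2 : m + 0 + 1 = m + 1 := by omega
        rw [he2] at h2
        have hexp : ℓ + (m - ℓ) + 1 = m + 1 := by omega
        rw [hexp] at h1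
        omega
  refine ⟨hset, ?_⟩
  rw [hset]
  have hinj : Set.InjOn
      (fun ℓ : ℕ => List.replicate ℓ 1 ++ 0 :: List.replicate (m - ℓ) 3)
      {ℓ | ℓ < m + 1} := by
    intro a _ b _ h
    have hc := congrArg (List.count 1) h
    simpa [List.count_append, List.count_cons, List.count_replicate] using hc
  rw [Set.ncard_image_of_injOn hinj]
  have : {ℓ : ℕ | ℓ < m + 1} = ↑(Finset.range (m+1)) := by ext x; simp
  rw [this, Set.ncard_coe_finset, Finset.card_range]
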